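/- arXiv:1407.7220 — 3 statements merged into one kernel-verified Lean document; each statement's English description precedes it below -/
import Mathlib

section
/- Let $Q \subseteq \mathbb{R}^m$ be a nonempty closed convex set, $\bar{y} \in \mathbb{R}^m$, and for $\gamma \geq 0$ consider $F_\gamma(y,\xi) = \tfrac12\|y-\bar y\|^2 + \tfrac{\gamma}{2}\|\xi\|^2$ minimized over the feasible set $\{(y,\xi) : A_1 y + A_2 \xi \geq 0\}$. Suppose $(y(\gamma), \xi(\gamma))$ is the minimizer for $\gamma > 0$, and $(y^*, \xi^*)$ is the minimum-norm optimal solution of the $\gamma = 0$ problem (i.e., the minimizer of $\tfrac12\|y\|^2 + \tfrac12\|\xi\|^2$ over the optimal-solution set of $\min \tfrac12\|y-\bar y\|^2$ subject to $A_1 y + A_2 \xi \geq 0$). Then $\|y(\gamma) - y^*\| \leq \|\xi^*\| \sqrt{\gamma}$, i.e., the regularization path is Hölder continuous with exponent $1/2$ at $\gamma = 0$. -/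
open scoped RealInnerProductSpace

private lemma vi_limit (A C : ℝ) (h : ∀ t : ℝ, 0 < t → t ≤ 1 → 0 ≤ A + t * C) : 0 ≤ A := by
  by_contra hA
  push_neg at hA
  rcases le_or_gt C 0 with hC | hC
  · have := h 1 one_pos le_rfl
    linarith
  · have ht0 : (0:ℝ) < min 1 (-A / (2 * C)) := by
      apply lt_min one_pos
      exact div_pos (by linarith) (by linarith)
    have := h _ ht0 (min_le_left _ _)
    have h2 : min 1 (-A / (2 * C)) * C ≤ (-A / (2 * C)) * C :=
      mul_le_mul_of_nonneg_right (min_le_right _ _) hC.le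
    have h3 : (-A / (2 * C)) * C = -A / 2 := by field_simp
    linarith

/-- Hölder continuity (exponent 1/2) of the Tikhonov regularization path
at γ = 0 for the convex regression QP. -/
theorem tikhonov_path_holder
    (m p M : ℕ)
    (A1 : EuclideanSpace ℝ (Fin m) →ₗ[ℝ] EuclideanSpace ℝ (Fin M))
    (A2 : EuclideanSpace ℝ (Fin p) →ₗ[ℝ] EuclideanSpace ℝ (Fin M))
    (ybar : EuclideanSpace ℝ (Fin m))
    (Feas : Set (EuclideanSpace ℝ (Fin m) × EuclideanSpace ℝ (Fin p)))
    (hFeas : Feas = {q | ∀ i, 0 ≤ (A1 q.1 + A2 q.2) i})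
    (OptSet : Set (EuclideanSpace ℝ (Fin m) × EuclideanSpace ℝ (Fin p)))
    (hOpt : OptSet = {q | q ∈ Feas ∧ ∀ r ∈ Feas,
        (1/2) * ‖q.1 - ybar‖^2 ≤ (1/2) * ‖r.1 - ybar‖^2})
    (ystar : EuclideanSpace ℝ (Fin m)) (ξstar : EuclideanSpace ℝ (Fin p))
    (hstar : (ystar, ξstar) ∈ OptSet ∧ ∀ r ∈ OptSet,
        (1/2) * ‖ystar‖^2 + (1/2) * ‖ξstar‖^2 ≤ (1/2) * ‖r.1‖^2 + (1/2) * ‖r.2‖^2)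
    (γ : ℝ) (hγ : 0 < γ)
    (yγ : EuclideanSpace ℝ (Fin m)) (ξγ : EuclideanSpace ℝ (Fin p))
    (hγmin : (yγ, ξγ) ∈ Feas ∧ ∀ r ∈ Feas,
        (1/2) * ‖yγ - ybar‖^2 + (γ/2) * ‖ξγ‖^2 ≤
        (1/2) * ‖r.1 - ybar‖^2 + (γ/2) * ‖r.2‖^2) :
    ‖yγ - ystar‖ ≤ ‖ξstar‖ * Real.sqrt γ := by
  subst hFeas hOpt
  obtain ⟨hγfeas, hγopt⟩ := hγmin
  obtain ⟨⟨hsfeas, hsopt⟩, -⟩ := hstar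
  -- feasibility of convex combinations
  have hseg : ∀ (y₀ y₁ : EuclideanSpace ℝ (Fin m)) (ξ₀ ξ₁ : EuclideanSpace ℝ (Fin p)),
      (∀ i, 0 ≤ (A1 y₀ + A2 ξ₀) i) → (∀ i, 0 ≤ (A1 y₁ + A2 ξ₁) i) →
      ∀ t : ℝ, 0 < t → t ≤ 1 →
      ∀ i, 0 ≤ (A1 (y₀ + t • (y₁ - y₀)) + A2 (ξ₀ + t • (ξ₁ - ξ₀))) i := by
    intro y₀ y₁ ξ₀ ξ₁ h₀ h₁ t ht0 ht1 i
    have e : (A1 (y₀ + t • (y₁ - y₀)) + A2 (ξ₀ + t • (ξ₁ - ξ₀))) i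
        = (1 - t) * (A1 y₀ + A2 ξ₀) i + t * (A1 y₁ + A2 ξ₁) i := by
      simp [map_add, map_smul, map_sub, PiLp.add_apply, PiLp.smul_apply, PiLp.sub_apply,
        smul_eq_mul]
      ring
    rw [e]
    have := h₀ i
    have := h₁ i
    nlinarith
  set Δy := ystar - yγ with hΔy
  set Δξ := ξstar - ξγ with hΔξ
  -- VI for the γ-problem at (ystar, ξstar)
  have VI1 : 0 ≤ ⟪yγ - ybar, Δy⟫ + γ * ⟪ξγ, Δξ⟫ := by
    apply vi_limit _ ((1/2) * ‖Δy‖^2 + (γ/2) * ‖Δξ‖^2)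
    intro t ht0 ht1
    have hfeas := hseg yγ ystar ξγ ξstar hγfeas hsfeas t ht0 ht1
    have hle := hγopt (yγ + t • Δy, ξγ + t • Δξ) hfeas
    simp only at hle
    have e1 : ‖yγ + t • Δy - ybar‖^2 = ‖yγ - ybar‖^2 + 2 * (t * ⟪yγ - ybar, Δy⟫) + t^2 * ‖Δy‖^2 := by
      have : yγ + t • Δy - ybar = (yγ - ybar) + t • Δy := by abel
      rw [this, norm_add_sq_real, real_inner_smul_right, norm_smul]
      simp [mul_pow, abs_of_pos ht0]
    have e2 : ‖ξγ + t • Δξ‖^2 = ‖ξγ‖^2 + 2 * (t * ⟪ξγ, Δξ⟫) + t^2 * ‖Δξ‖^2 := by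
      rw [norm_add_sq_real, real_inner_smul_right, norm_smul]
      simp [mul_pow, abs_of_pos ht0]
    rw [e1, e2] at hle
    nlinarith
  -- VI for the limit problem at (yγ, ξγ)
  have VI2 : 0 ≤ ⟪ystar - ybar, -Δy⟫ := by
    have := vi_limit ⟪ystar - ybar, -Δy⟫ ((1/2) * ‖Δy‖^2) ?_
    · exact this
    intro t ht0 ht1
    have hfeas := hseg ystar yγ ξstar ξγ hsfeas hγfeas t ht0 ht1
    have hle := hsopt (ystar + t • (yγ - ystar), ξstar + t • (ξγ - ξstar)) hfeas
    simp only at hle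
    have e1 : ‖ystar + t • (yγ - ystar) - ybar‖^2
        = ‖ystar - ybar‖^2 + 2 * (t * ⟪ystar - ybar, -Δy⟫) + t^2 * ‖Δy‖^2 := by
      have h1 : ystar + t • (yγ - ystar) - ybar = (ystar - ybar) + t • (-Δy) := by
        rw [hΔy]; module
      rw [h1, norm_add_sq_real, real_inner_smul_right, norm_smul]
      simp [mul_pow, abs_of_pos ht0]
    rw [e1] at hle
    nlinarith
  -- combine
  have key : ‖Δy‖^2 ≤ γ * ⟪ξγ, Δξ⟫ := by
    have hdiff : ⟪yγ - ybar, Δy⟫ + ⟪ystar - ybar, -Δy⟫ = -‖Δy‖^2 := by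
      rw [inner_neg_right, ← sub_eq_add_neg, ← inner_sub_left]
      have : yγ - ybar - (ystar - ybar) = -Δy := by rw [hΔy]; abel
      rw [this, inner_neg_left, real_inner_self_eq_norm_sq]
    nlinarith
  have hbound : ‖Δy‖^2 ≤ γ * ‖ξstar‖^2 := by
    have hc : ⟪ξγ, Δξ⟫ = ⟪ξγ, ξstar⟫ - ‖ξγ‖^2 := by
      rw [hΔξ, inner_sub_right, real_inner_self_eq_norm_sq]
    have hcs : ⟪ξγ, ξstar⟫ ≤ ‖ξγ‖ * ‖ξstar‖ := real_inner_le_norm _ _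
    nlinarith [norm_nonneg ξγ, norm_nonneg ξstar, sq_nonneg (‖ξγ‖ - ‖ξstar‖)]
  have hnorm : ‖yγ - ystar‖ = ‖Δy‖ := by rw [hΔy, ← norm_neg]; congr 1; abel
  rw [hnorm]
  have h2 : ‖Δy‖ ≤ Real.sqrt (γ * ‖ξstar‖^2) := by
    rw [← Real.sqrt_sq (norm_nonneg Δy)]
    exact Real.sqrt_le_sqrt hbound
  rwa [Real.sqrt_mul hγ.le, Real.sqrt_sq (norm_nonneg _), mul_comm] at h2
end

section
/- Let $f : \mathbb{R}^{m_1} \times \mathbb{R}^{m_2} \to \mathbb{R}$ be convex and differentiable, such that for each fixed $x_2$ the map $x_1 \mapsto \nabla_{x_1} f(x_1, x_2)$ is Lipschitz with constant $L_1$, and for each fixed $x_1$ the map $x_2 \mapsto \nabla_{x_2} f(x_1, x_2)$ is Lipschitz with constant $L_2$. Then for all $(x_1,x_2)$ and $(z_1,z_2)$: $f(z_1, z_2) \leq f(x_1, x_2) + \langle \nabla_{x_1} f(x_1,x_2), z_1 - x_1 \rangle + \langle \nabla_{x_2} f(x_1,x_2), z_2 - x_2 \rangle + L_1 \|z_1 -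 x_1\|^2 + L_2 \|z_2 - x_2\|^2$. -/
/-!
Write `y₁ = x₁ + 2 (z₁ - x₁)` and `y₂ = x₂ + 2 (z₂ - x₂)`. Then `(z₁, z₂)` is the midpoint of
`(y₁, x₂)` and `(x₁, y₂)`, two points each of which differs from `(x₁, x₂)` in one block only, so
joint convexity bounds `f (z₁, z₂)` by the average of the two one-block descent-lemma bounds.
The step `2 (zᵢ - xᵢ)` turns `Lᵢ / 2` into `2 Lᵢ`, which the averaging halves to `Lᵢ`.
-/

open scoped RealInnerProductSpace

section

variable {E : Type*} [NormedAddCommGroup E] [InnerProductSpace ℝ E] [CompleteSpace E]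

theorem HasGradientAt.hasDerivAt_comp_add_smul {f : E → ℝ} {g x d : E} (t : ℝ)
    (hf : HasGradientAt f g (x + t • d)) :
    HasDerivAt (fun s : ℝ => f (x + s • d)) ⟪g, d⟫ t := by
  have hline : HasDerivAt (fun s : ℝ => x + s • d) d t := by
    simpa using ((hasDerivAt_id t).smul_const d).const_add x
  have := hf.hasFDerivAt.comp_hasDerivAt t hline
  simp only [InnerProductSpace.toDual_apply_apply] at this
  exact this

theorem le_add_inner_add_of_lipschitz_gradient {f : E → ℝ} {g : E → E}
    (hg : ∀ x, HasGradientAt f (g x) x) {L : ℝ} (hL : ∀ a b, ‖g a - g b‖ ≤ L * ‖a - b‖)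
    (x d : E) : f (x + d) ≤ f x + ⟪g x, d⟫ + L / 2 * ‖d‖ ^ 2 := by
  set φ : ℝ → ℝ := fun t => f (x + t • d) - t * ⟪g x, d⟫ - L / 2 * t ^ 2 * ‖d‖ ^ 2
  have hφ : ∀ t, HasDerivAt φ (⟪g (x + t • d), d⟫ - ⟪g x, d⟫ - L * t * ‖d‖ ^ 2) t := by
    intro t
    refine ((((hg (x + t • d)).hasDerivAt_comp_add_smul t).sub
      ((hasDerivAt_id t).mul_const ⟪g x, d⟫)).sub
      (((hasDerivAt_pow 2 t).const_mul (L / 2)).mul_const (‖d‖ ^ 2))).congr_deriv ?_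
    simp only [Nat.cast_ofNat]; ring
  have hφ_nonpos : ∀ t ∈ interior (Set.Icc (0 : ℝ) 1),
      ⟪g (x + t • d), d⟫ - ⟪g x, d⟫ - L * t * ‖d‖ ^ 2 ≤ 0 := by
    intro t ht
    rw [interior_Icc] at ht
    calc ⟪g (x + t • d), d⟫ - ⟪g x, d⟫ - L * t * ‖d‖ ^ 2
        = ⟪g (x + t • d) - g x, d⟫ - L * t * ‖d‖ ^ 2 := by rw [inner_sub_left]
      _ ≤ L * ‖(x + t • d) - x‖ * ‖d‖ - L * t * ‖d‖ ^ 2 := by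
          gcongr
          exact (real_inner_le_norm _ _).trans (by gcongr; exact hL _ _)
      _ = 0 := by
          rw [add_sub_cancel_left, norm_smul, Real.norm_of_nonneg ht.1.le]; ring
  have hanti := antitoneOn_of_hasDerivWithinAt_nonpos (convex_Icc 0 1)
    (fun t _ => (hφ t).continuousAt.continuousWithinAt) (fun t _ => (hφ t).hasDerivWithinAt) hφ_nonpos
  have := hanti (Set.left_mem_Icc.2 zero_le_one) (Set.right_mem_Icc.2 zero_le_one) zero_le_one
  simp only [φ, one_smul, zero_smul, add_zero] at this
  linarith

end

theorem ConvexOn.le_midpoint_blocks {E F : Type*} [AddCommGroup E] [Module ℝ E]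
    [AddCommGroup F] [Module ℝ F] {f : E × F → ℝ} (hf : ConvexOn ℝ Set.univ f)
    (x₁ z₁ : E) (x₂ z₂ : F) :
    f (z₁, z₂) ≤ (f (x₁ + (2 : ℝ) • (z₁ - x₁), x₂) + f (x₁, x₂ + (2 : ℝ) • (z₂ - x₂))) / 2 := by
  have hmid : (1 / 2 : ℝ) • (x₁ + (2 : ℝ) • (z₁ - x₁), x₂)
      + (1 / 2 : ℝ) • (x₁, x₂ + (2 : ℝ) • (z₂ - x₂)) = (z₁, z₂) := by
    rw [Prod.smul_mk, Prod.smul_mk, Prod.mk_add_mk]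
    congr 1 <;> module
  have := hf.2 (Set.mem_univ (x₁ + (2 : ℝ) • (z₁ - x₁), x₂))
    (Set.mem_univ (x₁, x₂ + (2 : ℝ) • (z₂ - x₂))) (by norm_num : (0:ℝ) ≤ 1/2)
    (by norm_num : (0:ℝ) ≤ 1/2) (by norm_num)
  rw [hmid, smul_eq_mul, smul_eq_mul] at this
  linarith

/-- block-Lipschitz descent inequality with doubled constants for jointly
convex differentiable functions (Lemma 3 of the paper). -/
theorem block_lipschitz_upper_bound
    (m1 m2 : ℕ)
    (f : EuclideanSpace ℝ (Fin m1) × EuclideanSpace ℝ (Fin m2) → ℝ)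
    (hconv : ConvexOn ℝ Set.univ f)
    (g1 : EuclideanSpace ℝ (Fin m1) × EuclideanSpace ℝ (Fin m2) → EuclideanSpace ℝ (Fin m1))
    (g2 : EuclideanSpace ℝ (Fin m1) × EuclideanSpace ℝ (Fin m2) → EuclideanSpace ℝ (Fin m2))
    (hg1 : ∀ x1 x2, HasGradientAt (fun z1 => f (z1, x2)) (g1 (x1, x2)) x1)
    (hg2 : ∀ x1 x2, HasGradientAt (fun z2 => f (x1, z2)) (g2 (x1, x2)) x2)
    (L1 L2 : ℝ)
    (hL1 : ∀ x2 a b, ‖g1 (a, x2) - g1 (b, x2)‖ ≤ L1 * ‖a - b‖)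
    (hL2 : ∀ x1 a b, ‖g2 (x1, a) - g2 (x1, b)‖ ≤ L2 * ‖a - b‖) :
    ∀ x1 x2 z1 z2,
      f (z1, z2) ≤ f (x1, x2) + ⟪g1 (x1, x2), z1 - x1⟫ + ⟪g2 (x1, x2), z2 - x2⟫
        + L1 * ‖z1 - x1‖^2 + L2 * ‖z2 - x2‖^2 := by
  intro x1 x2 z1 z2
  have hstep1 :=
    le_add_inner_add_of_lipschitz_gradient (hg1 · x2) (hL1 x2) x1 ((2 : ℝ) • (z1 - x1))
  have hstep2 :=
    le_add_inner_add_of_lipschitz_gradient (hg2 x1 ·) (hL2 x1) x2 ((2 : ℝ) • (z2 - x2))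
  have hmid := hconv.le_midpoint_blocks x1 z1 x2 z2
  rw [real_inner_smul_right, norm_smul, Real.norm_two] at hstep1 hstep2
  linarith
end

section
/- Suboptimality and infeasibility bounds for inexact dual solutions (Theorem 1): Let $g_\gamma(\theta) = \min_{(y,\xi) \in Q_1} \{\tfrac12\|y - \bar y\|^2 + \tfrac{\gamma}{2}\|\xi\|^2 - \theta^T C (y; \xi)\}$ with unique minimizer $\eta(\theta) = (y(\theta), \xi(\theta))$, where $Q_1$ is a closed convex set and $C$ a matrix. Assume $\nabla g_\gamma(\theta) = -C\eta(\theta)$ is Lipschitz with constant $L_g = \sigma_{\max}^2(C)/\gamma$. Let $\theta^*$ maximize $g_\gamma$ over a convex set $Q_2$, let $\theta_\delta \in Q_2$ be $\delta$-optimal ($g_\gamma(\theta^*) - g_\gamma(\theta_\delta) \leq \delta$), and write $(y_\delta, \xi_\delta) = \eta(\theta_\delta)$, $(y(\gamma), \xi(\gamma)) = \eta(\theta^*)$. Then $\|C(\eta(\theta_\delta) - \eta(\theta^*))\|_2 \leq \sqrt{2\delta/\gamma}\, \sigma_{\max}(C)$. In particular, if the rows of $C$ include the identity block on the $y$-coordinates,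 $\|y_\delta - y(\gamma)\|_2 \leq \sqrt{2\delta/\gamma}\,\sigma_{\max}(C)$. -/
/-!
Write `F θ = C η(θ)`, so that `-g` is convex with gradient `F`, which is `L`-Lipschitz for
`L = σ²/γ`. Convexity plus the descent lemma give cocoercivity,
`‖F θ - F θ*‖² ≤ 2L (-g θ + g θ* - ⟪F θ*, θ - θ*⟫)`, and first-order optimality of `θ*` on `Q₂`
makes the inner product term nonnegative. Hence `‖F θ_δ - F θ*‖² ≤ 2Lδ = (2δ/γ) σ²`.
-/

open scoped RealInnerProductSpace

open Set

section Gradient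

variable {E : Type*} [NormedAddCommGroup E] [InnerProductSpace ℝ E] [CompleteSpace E]
  {f : E → ℝ} {f' : E → E} {x y d g : E} {L : ℝ}

theorem HasGradientAt.neg (h : HasGradientAt f g x) : HasGradientAt (-f) (-g) x := by
  rw [hasGradientAt_iff_hasFDerivAt, map_neg]
  exact h.hasFDerivAt.neg

theorem HasGradientAt.hasDerivAt_add_smul {t : ℝ} (h : HasGradientAt f g (x + t • d)) :
    HasDerivAt (fun s : ℝ => f (x + s • d)) ⟪g, d⟫ t := by
  have hline : HasDerivAt (fun s : ℝ => x + s • d) d t := by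
    simpa using ((hasDerivAt_id t).smul_const d).const_add x
  simpa [Function.comp_def] using h.hasFDerivAt.comp_hasDerivAt t hline

theorem IsMinOn.inner_gradient_sub_nonneg {s : Set E} (hs : Convex ℝ s) (hmin : IsMinOn f s x)
    (hf : HasGradientAt f g x) (hx : x ∈ s) (hy : y ∈ s) : 0 ≤ ⟪g, y - x⟫ := by
  simpa using hmin.localize.hasFDerivWithinAt_nonneg hf.hasFDerivAt.hasFDerivWithinAt
    (sub_mem_posTangentConeAt_of_segment_subset (hs.segment_subset hx hy))

theorem ConvexOn.inner_gradient_sub_le (hf : ConvexOn ℝ univ f) (hg : HasGradientAt f g x)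
    (y : E) : ⟪g, y - x⟫ ≤ f y - f x := by
  have hline : ConvexOn ℝ univ (fun t : ℝ => f (x + t • (y - x))) := by
    simpa [Function.comp_def, AffineMap.lineMap_apply_module', add_comm] using
      hf.comp_affineMap (AffineMap.lineMap x y)
  simpa [slope_def_field] using
    hline.le_slope_of_hasDerivAt (mem_univ 0) (mem_univ 1) zero_lt_one
      ((by simpa using hg : HasGradientAt f g (x + (0 : ℝ) • (y - x))).hasDerivAt_add_smul)

theorem sub_sub_inner_le_of_lipschitz_gradient (hf : ∀ z, HasGradientAt f (f' z) z)
    (hL : ∀ z w, ‖f' z - f' w‖ ≤ L * ‖z - w‖) (x d : E) :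
    f (x + d) - f x - ⟪f' x, d⟫ ≤ L / 2 * ‖d‖ ^ 2 := by
  set φ : ℝ → ℝ := fun t => f (x + t • d) - t * ⟪f' x, d⟫ - L / 2 * ‖d‖ ^ 2 * t ^ 2
  have hφ : ∀ t, HasDerivAt φ (⟪f' (x + t • d) - f' x, d⟫ - L * ‖d‖ ^ 2 * t) t := by
    intro t
    have := (((hf (x + t • d)).hasDerivAt_add_smul).sub
      ((hasDerivAt_id t).mul_const ⟪f' x, d⟫)).sub
      ((hasDerivAt_pow 2 t).const_mul (L / 2 * ‖d‖ ^ 2))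
    exact this.congr_deriv (by rw [inner_sub_left]; push_cast; ring)
  have hφ_nonpos : ∀ t ∈ interior (Icc (0 : ℝ) 1),
      ⟪f' (x + t • d) - f' x, d⟫ - L * ‖d‖ ^ 2 * t ≤ 0 := by
    intro t ht
    rw [interior_Icc] at ht
    have hLt := hL (x + t • d) x
    rw [add_sub_cancel_left, norm_smul, Real.norm_of_nonneg ht.1.le] at hLt
    have := (real_inner_le_norm _ _).trans (mul_le_mul_of_nonneg_right hLt (norm_nonneg d))
    nlinarith
  have hanti := antitoneOn_of_hasDerivWithinAt_nonpos (convex_Icc 0 1)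
    (fun t _ => (hφ t).continuousAt.continuousWithinAt) (fun t _ => (hφ t).hasDerivWithinAt)
    hφ_nonpos
  have := hanti (left_mem_Icc.2 zero_le_one) (right_mem_Icc.2 zero_le_one) zero_le_one
  simp only [φ, zero_smul, add_zero, one_smul, zero_mul, one_mul, mul_one, sub_zero, ne_eq,
    OfNat.ofNat_ne_zero, not_false_eq_true, zero_pow, mul_zero, one_pow] at this
  linarith

theorem ConvexOn.norm_sub_gradient_sq_le (hconv : ConvexOn ℝ univ f)
    (hf : ∀ z, HasGradientAt f (f' z) z) (hL₀ : 0 ≤ L)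
    (hL : ∀ z w, ‖f' z - f' w‖ ≤ L * ‖z - w‖) (x y : E) :
    ‖f' x - f' y‖ ^ 2 ≤ 2 * L * (f x - f y - ⟪f' y, x - y⟫) := by
  rcases hL₀.eq_or_lt with rfl | hLpos
  · simpa using hL x y
  set v := f' x - f' y
  -- compare the descent upper bound with the convex lower bound at the gradient step `x + d`
  set d := -L⁻¹ • v
  have hupper := sub_sub_inner_le_of_lipschitz_gradient hf hL x d
  have hlower := hconv.inner_gradient_sub_le (hf y) (x + d)
  have hd : ‖d‖ ^ 2 = L⁻¹ ^ 2 * ‖v‖ ^ 2 := by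
    rw [norm_smul, norm_neg, Real.norm_of_nonneg (inv_nonneg.2 hLpos.le), mul_pow]
  have hvd : ⟪v, d⟫ = -L⁻¹ * ‖v‖ ^ 2 := by
    rw [real_inner_smul_right, real_inner_self_eq_norm_sq]
  have hinner : ⟪f' x, d⟫ - ⟪f' y, x + d - y⟫ = ⟪v, d⟫ - ⟪f' y, x - y⟫ := by
    simp only [v, inner_sub_left, inner_sub_right, inner_add_right]; ring
  have hstep : L⁻¹ * ‖v‖ ^ 2 / 2 ≤ f x - f y - ⟪f' y, x - y⟫ := by
    rw [hd] at hupper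
    have hLL : L / 2 * (L⁻¹ ^ 2 * ‖v‖ ^ 2) = L⁻¹ * ‖v‖ ^ 2 / 2 := by field_simp
    linarith
  calc ‖v‖ ^ 2 = 2 * L * (L⁻¹ * ‖v‖ ^ 2 / 2) := by field_simp
    _ ≤ _ := by gcongr

theorem ConvexOn.norm_sub_gradient_sq_le_of_isMinOn {s : Set E} (hconv : ConvexOn ℝ univ f)
    (hf : ∀ z, HasGradientAt f (f' z) z) (hL₀ : 0 ≤ L)
    (hL : ∀ z w, ‖f' z - f' w‖ ≤ L * ‖z - w‖) (hs : Convex ℝ s) (hmin : IsMinOn f s x)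
    (hx : x ∈ s) (hy : y ∈ s) :
    ‖f' y - f' x‖ ^ 2 ≤ 2 * L * (f y - f x) := by
  have hopt := hmin.inner_gradient_sub_nonneg hs (hf x) hx hy
  have hcoco := hconv.norm_sub_gradient_sq_le hf hL₀ hL y x
  nlinarith

end Gradient

/-- Here `C(y;ξ) = B1 y + B2 ξ`, `η(θ) = (Y θ, Ξ θ)` and `g` is `g_γ`. -/
theorem inexact_dual_suboptimality_bound_general
    (m p M : ℕ)
    (B1 : EuclideanSpace ℝ (Fin m) →ₗ[ℝ] EuclideanSpace ℝ (Fin M))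
    (B2 : EuclideanSpace ℝ (Fin p) →ₗ[ℝ] EuclideanSpace ℝ (Fin M))
    (γ : ℝ) (hγ : 0 < γ) (σ : ℝ) (hσ : 0 ≤ σ)
    (Y : EuclideanSpace ℝ (Fin M) → EuclideanSpace ℝ (Fin m))
    (Ξ : EuclideanSpace ℝ (Fin M) → EuclideanSpace ℝ (Fin p))
    (g : EuclideanSpace ℝ (Fin M) → ℝ)
    (hconc : ConcaveOn ℝ Set.univ g)
    (hgrad : ∀ θ, HasGradientAt g (-(B1 (Y θ) + B2 (Ξ θ))) θ)
    (hLip : ∀ θ1 θ2, ‖(B1 (Y θ1) + B2 (Ξ θ1)) - (B1 (Y θ2) + B2 (Ξ θ2))‖ ≤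
      (σ^2 / γ) * ‖θ1 - θ2‖)
    (Q2 : Set (EuclideanSpace ℝ (Fin M))) (hQ2 : Convex ℝ Q2)
    (θstar : EuclideanSpace ℝ (Fin M)) (hθstar : θstar ∈ Q2)
    (hmax : ∀ θ ∈ Q2, g θ ≤ g θstar)
    (θδ : EuclideanSpace ℝ (Fin M)) (hθδ : θδ ∈ Q2)
    (δ : ℝ) (hδ : g θstar - g θδ ≤ δ) :
    ‖(B1 (Y θδ) + B2 (Ξ θδ)) - (B1 (Y θstar) + B2 (Ξ θstar))‖ ≤ Real.sqrt (2*δ/γ) * σ ∧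
    ((∀ (a : EuclideanSpace ℝ (Fin m)) (b : EuclideanSpace ℝ (Fin p)), ‖a‖ ≤ ‖B1 a + B2 b‖)
      → ‖Y θδ - Y θstar‖ ≤ Real.sqrt (2*δ/γ) * σ) := by
  set F := fun θ => B1 (Y θ) + B2 (Ξ θ)
  have hgradF : ∀ θ, HasGradientAt (-g) (F θ) θ := fun θ => by
    simpa using (hgrad θ).neg
  have hsq : ‖F θδ - F θstar‖ ^ 2 ≤ 2 * δ / γ * σ ^ 2 :=
    calc ‖F θδ - F θstar‖ ^ 2 ≤ 2 * (σ ^ 2 / γ) * ((-g) θδ - (-g) θstar) :=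
          hconc.neg.norm_sub_gradient_sq_le_of_isMinOn hgradF (by positivity) hLip hQ2
            (fun θ hθ => neg_le_neg (hmax θ hθ)) hθstar hθδ
      _ ≤ 2 * (σ ^ 2 / γ) * δ := by
          gcongr
          simpa only [Pi.neg_apply, neg_sub_neg] using hδ
      _ = 2 * δ / γ * σ ^ 2 := by ring
  have hbound : ‖F θδ - F θstar‖ ≤ Real.sqrt (2 * δ / γ) * σ := by
    rw [← Real.sqrt_sq hσ, ← Real.sqrt_mul' _ (sq_nonneg σ)]
    exact Real.le_sqrt_of_sq_le hsq
  refine ⟨hbound, fun hC => ?_⟩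
  calc ‖Y θδ - Y θstar‖ ≤ ‖B1 (Y θδ - Y θstar) + B2 (Ξ θδ - Ξ θstar)‖ := hC _ _
    _ = ‖F θδ - F θstar‖ := by simp only [F, map_sub]; abel_nf
    _ ≤ _ := hbound

/-- suboptimality bound for inexact dual solutions (Theorem 1 of the paper).
Here `η(θ) = (Y θ, Ξ θ)` is the unique minimizer of the Lagrangian
`½‖y - ȳ‖² + (γ/2)‖ξ‖² - ⟪θ, C(y;ξ)⟫` over `Q1`, where the matrix `C` acts on the
concatenated vector via `C(y;ξ) = B1 y + B2 ξ`; its transpose gradient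
`∇g_γ(θ) = -Cη(θ)` is Lipschitz with constant `L_g = σ_max(C)²/γ`. -/
theorem inexact_dual_suboptimality_bound
    (m p M : ℕ)
    (B1 : EuclideanSpace ℝ (Fin m) →ₗ[ℝ] EuclideanSpace ℝ (Fin M))
    (B2 : EuclideanSpace ℝ (Fin p) →ₗ[ℝ] EuclideanSpace ℝ (Fin M))
    (ybar : EuclideanSpace ℝ (Fin m))
    (γ : ℝ) (hγ : 0 < γ) (σ : ℝ) (hσ : 0 ≤ σ)
    -- σ is a bound on the operator (largest singular value) of C = [B1 B2]
    (hσmax : ∀ (a : EuclideanSpace ℝ (Fin m)) (b : EuclideanSpace ℝ (Fin p)),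
      ‖B1 a + B2 b‖ ≤ σ * Real.sqrt (‖a‖^2 + ‖b‖^2))
    (Q1 : Set (EuclideanSpace ℝ (Fin m) × EuclideanSpace ℝ (Fin p)))
    (hQ1 : IsClosed Q1) (hQ1conv : Convex ℝ Q1)
    (Y : EuclideanSpace ℝ (Fin M) → EuclideanSpace ℝ (Fin m))
    (Ξ : EuclideanSpace ℝ (Fin M) → EuclideanSpace ℝ (Fin p))
    (hmin : ∀ θ, (Y θ, Ξ θ) ∈ Q1 ∧ ∀ q ∈ Q1,
      (1/2) * ‖Y θ - ybar‖^2 + (γ/2) * ‖Ξ θ‖^2 - ⟪θ, B1 (Y θ) + B2 (Ξ θ)⟫ ≤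
      (1/2) * ‖q.1 - ybar‖^2 + (γ/2) * ‖q.2‖^2 - ⟪θ, B1 q.1 + B2 q.2⟫)
    (g : EuclideanSpace ℝ (Fin M) → ℝ)
    (hg : ∀ θ, g θ = (1/2) * ‖Y θ - ybar‖^2 + (γ/2) * ‖Ξ θ‖^2 - ⟪θ, B1 (Y θ) + B2 (Ξ θ)⟫)
    (hconc : ConcaveOn ℝ Set.univ g)
    (hgrad : ∀ θ, HasGradientAt g (-(B1 (Y θ) + B2 (Ξ θ))) θ)
    (hLip : ∀ θ1 θ2, ‖(B1 (Y θ1) + B2 (Ξ θ1)) - (B1 (Y θ2) + B2 (Ξ θ2))‖ ≤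
      (σ^2 / γ) * ‖θ1 - θ2‖)
    (Q2 : Set (EuclideanSpace ℝ (Fin M))) (hQ2 : Convex ℝ Q2)
    (θstar : EuclideanSpace ℝ (Fin M)) (hθstar : θstar ∈ Q2)
    (hmax : ∀ θ ∈ Q2, g θ ≤ g θstar)
    (θδ : EuclideanSpace ℝ (Fin M)) (hθδ : θδ ∈ Q2)
    (δ : ℝ) (hδpos : 0 < δ) (hδ : g θstar - g θδ ≤ δ) :
    ‖(B1 (Y θδ) + B2 (Ξ θδ)) - (B1 (Y θstar) + B2 (Ξ θstar))‖ ≤ Real.sqrt (2*δ/γ) * σ ∧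
    ((∀ (a : EuclideanSpace ℝ (Fin m)) (b : EuclideanSpace ℝ (Fin p)), ‖a‖ ≤ ‖B1 a + B2 b‖)
      → ‖Y θδ - Y θstar‖ ≤ Real.sqrt (2*δ/γ) * σ) :=
  inexact_dual_suboptimality_bound_general m p M B1 B2 γ hγ σ hσ Y Ξ g hconc hgrad hLip Q2 hQ2 θstar
    hθstar hmax θδ hθδ δ hδ
end
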